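/- arXiv:1108.3830 — 2 statements merged into one kernel-verified Lean document; each statement's English description precedes it below -/
import Mathlib

section
/- A positive composite integer n is a Carmichael number (i.e., b^(n-1) ≡ 1 (mod n) for every b coprime to n) if and only if n is squarefree and for every prime p dividing n, p - 1 divides n - 1. (Assume n is odd and composite with at least two prime divisors.) -/
/-!
Everything is a statement about the Carmichael function `λ n`, the exponent of `(ZMod n)ˣ`:
`n` is a Carmichael number exactly when `λ n ∣ n - 1`. As `λ p = p - 1` and `p ∣ λ (p ^ 2)`,
this divisibility forces `p - 1 ∣ n - 1` for `p ∣ n`, and rules out `p ^ 2 ∣ n` because `p`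
cannot divide both `n` and `n - 1`. Conversely, for squarefree `n` the Chinese remainder
theorem makes `λ n` the lcm of the `p - 1`.
-/

/-- A Carmichael number: a composite integer `n` such that `b^(n-1) ≡ 1 (mod n)`
for every `b` coprime to `n`. -/
def IsCarmichael (n : ℕ) : Prop :=
  1 < n ∧ ¬ n.Prime ∧ ∀ b : ℕ, Nat.Coprime b n → b ^ (n - 1) ≡ 1 [MOD n]

namespace ArithmeticFunction

theorem carmichael_dvd_iff_forall_pow_modEq_one {n k : ℕ} [NeZero n] :
    carmichael n ∣ k ↔ ∀ b : ℕ, b.Coprime n → b ^ k ≡ 1 [MOD n] := by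
  rw [carmichael_eq_exponent', Monoid.exponent_dvd_iff_forall_pow_eq_one]
  constructor
  · intro h b hb
    have hu := congr_arg Units.val (h (ZMod.unitOfCoprime b hb))
    rw [← ZMod.natCast_eq_natCast_iff, Nat.cast_pow, Nat.cast_one]
    simpa using hu
  · intro h u
    have hb := (ZMod.natCast_eq_natCast_iff _ _ _).mpr (h _ (ZMod.val_coe_unit_coprime u))
    rw [Nat.cast_pow, Nat.cast_one, ZMod.natCast_zmod_val] at hb
    exact Units.ext (by simpa using hb)

theorem carmichael_prime {p : ℕ} (hp : p.Prime) : carmichael p = p - 1 := by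
  have : Fact p.Prime := ⟨hp⟩
  rw [carmichael_eq_exponent hp.ne_zero, IsCyclic.exponent_eq_card, Nat.card_eq_fintype_card,
    ZMod.card_units]

theorem dvd_carmichael_prime_sq {p : ℕ} (hp : p.Prime) : p ∣ carmichael (p ^ 2) := by
  rcases eq_or_ne p 2 with rfl | hp₂
  · rw [carmichael_two_pow_of_le_two le_rfl]
    norm_num
  · rw [carmichael_pow_of_prime_ne_two 2 hp hp₂, Nat.totient_prime_pow hp two_pos]
    exact (dvd_pow_self p one_ne_zero).mul_right _

theorem carmichael_dvd_iff_of_squarefree {n k : ℕ} (hn : Squarefree n) :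
    carmichael n ∣ k ↔ ∀ p : ℕ, p.Prime → p ∣ n → p - 1 ∣ k := by
  have : NeZero n := ⟨hn.ne_zero⟩
  rw [carmichael_factorization, Finset.lcm_dvd_iff]
  simp only [Nat.mem_primeFactors_of_ne_zero hn.ne_zero, and_imp]
  refine forall_congr' fun p => forall_congr' fun hp => forall_congr' fun hpn => ?_
  rw [Nat.factorization_eq_one_of_squarefree hn hp hpn, pow_one, carmichael_prime hp]

theorem carmichael_dvd_sub_one_iff {n : ℕ} (hn : n ≠ 0) :
    carmichael n ∣ n - 1 ↔ Squarefree n ∧ ∀ p : ℕ, p.Prime → p ∣ n → p - 1 ∣ n - 1 := by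
  refine ⟨fun h => ⟨?_, fun p hp hpn => ?_⟩,
    fun ⟨hsq, hdvd⟩ => (carmichael_dvd_iff_of_squarefree hsq).mpr hdvd⟩
  · refine Nat.squarefree_iff_prime_squarefree.mpr fun p hp hpp => ?_
    have hpn1 : p ∣ n - 1 :=
      (dvd_carmichael_prime_sq hp).trans ((carmichael_dvd (by rwa [sq])).trans h)
    have hcop : n.Coprime (n - 1) :=
      (Nat.coprime_self_sub_right (Nat.one_le_iff_ne_zero.mpr hn)).mpr n.coprime_one_right
    exact hp.ne_one (Nat.eq_one_of_dvd_coprimes hcop ((dvd_mul_right p p).trans hpp) hpn1)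
  · exact carmichael_prime hp ▸ (carmichael_dvd hpn).trans h

end ArithmeticFunction

theorem korselt_criterion_general (n : ℕ) (h1 : 1 < n) (hcomp : ¬ n.Prime) :
    IsCarmichael n ↔ Squarefree n ∧ ∀ p : ℕ, p.Prime → p ∣ n → (p - 1) ∣ (n - 1) := by
  have : NeZero n := ⟨by omega⟩
  rw [IsCarmichael, ← ArithmeticFunction.carmichael_dvd_iff_forall_pow_modEq_one,
    ArithmeticFunction.carmichael_dvd_sub_one_iff (NeZero.ne n)]
  simp [h1, hcomp]

/-- **Korselt's Criterion.** An odd composite `n` with at least two distinct prime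
factors is a Carmichael number iff it is squarefree and `p - 1 ∣ n - 1` for every
prime `p ∣ n`. -/
theorem korselt_criterion (n : ℕ) (hodd : Odd n) (h1 : 1 < n) (hcomp : ¬ n.Prime)
    (htwo : 2 ≤ n.primeFactors.card) :
    IsCarmichael n ↔ Squarefree n ∧ ∀ p : ℕ, p.Prime → p ∣ n → (p - 1) ∣ (n - 1) :=
  korselt_criterion_general n h1 hcomp
end

section
/- For all real q ≥ 13, the quantity ((√(4q^(3/2) - 3q + 8) - √q)/(√q + 1))^2 is greater than √q. -/
/-!
Substitute `t = q ^ (1/4)`, so that `√q = t ^ 2` and `q = t ^ 4`. The claim becomes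
`t < (√(4 t⁶ - 3 t⁴ + 8) - t²) / (t² + 1)`, i.e. `t³ + t² + t < √(4 t⁶ - 3 t⁴ + 8)`, which after
squaring is the polynomial inequality `0 < 3 t⁶ - 2 t⁵ - 6 t⁴ - 2 t³ - t² + 8`. Its largest real
root lies just below `13 ^ (1/4) ≈ 1.8988`, so it holds for `t ≥ 1.897`.
-/

open Real

lemma sq_cubic_lt_sextic {t : ℝ} (ht : 1.897 ≤ t) :
    (t ^ 3 + t ^ 2 + t) ^ 2 < 4 * t ^ 6 - 3 * t ^ 4 + 8 := by
  nlinarith [sq_nonneg t, sq_nonneg (t - 2), sq_nonneg (t ^ 2 - 2 * t)]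

lemma lt_sqrt_sextic {t : ℝ} (ht : 1.897 ≤ t) :
    t ^ 3 + t ^ 2 + t < √(4 * t ^ 6 - 3 * t ^ 4 + 8) :=
  lt_sqrt_of_sq_lt (sq_cubic_lt_sextic ht)

lemma sq_lt_sq_sqrt_sextic_div {t : ℝ} (ht : 1.897 ≤ t) :
    t ^ 2 < ((√(4 * t ^ 4 * t ^ 2 - 3 * t ^ 4 + 8) - t ^ 2) / (t ^ 2 + 1)) ^ 2 := by
  have hroot : t ^ 3 + t ^ 2 + t < √(4 * t ^ 4 * t ^ 2 - 3 * t ^ 4 + 8) := by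
    convert lt_sqrt_sextic ht using 3; ring
  have hdiv : t < (√(4 * t ^ 4 * t ^ 2 - 3 * t ^ 4 + 8) - t ^ 2) / (t ^ 2 + 1) := by
    rw [lt_div_iff₀ (by positivity)]
    linarith
  exact pow_lt_pow_left₀ hdiv (by linarith) two_ne_zero

/-- For all real `q ≥ 13`, the quantity
`((√(4q^{3/2} - 3q + 8) - √q)/(√q + 1))^2` exceeds `√q`. -/
theorem korselt_calculus_bound (q : ℝ) (hq : 13 ≤ q) :
    Real.sqrt q <
      ((Real.sqrt (4 * q * Real.sqrt q - 3 * q + 8) - Real.sqrt q) /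
        (Real.sqrt q + 1)) ^ 2 := by
  set t := √(√q)
  have hsqrt : √q = t ^ 2 := (sq_sqrt (sqrt_nonneg q)).symm
  have hq4 : q = t ^ 4 := by
    rw [show 4 = 2 * 2 by rfl, pow_mul, ← hsqrt, sq_sqrt (by linarith)]
  have ht_ge : 1.897 ≤ t :=
    le_of_pow_le_pow_left₀ four_ne_zero (sqrt_nonneg _) (by norm_num; linarith)
  rw [hsqrt, hq4]
  exact sq_lt_sq_sqrt_sextic_div ht_ge
end
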